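/- arXiv:2509.06911 — 2 statements merged into one kernel-verified Lean document; each statement's English description precedes it below -/
import Mathlib

section
/- Let E be a set of rules. Then E is edge-unique if and only if every event is matched by at most one rule of E; that is, the condition that no two distinct rules of E have the same signature with pairwise intersecting value languages at every key holds if and only if for every event (σ,η) the set of rules of E matching (σ,η) has at most one element. -/
/-- A rule over keys `K`, type tags `T`, and alphabet `A`: a finite signature
of key/type pairs, and an assignment of a language of strings to each key/type pair. -/
structure Rule (K T A : Type*) where
  sig : Finset (K × T)
  val : K × T → Set (List A)

/-- An event: a finite signature of key/type pairs, and an assignment of a single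
string to each key/type pair. -/
structure Event (K T A : Type*) where
  sig : Finset (K × T)
  val : K × T → List A

/-- A rule matches an event iff they have the same signature and, at every key/type
pair of the signature, the event's string belongs to the rule's language. -/
def Matches {K T A : Type*} (r : Rule K T A) (ev : Event K T A) : Prop :=
  r.sig = ev.sig ∧ ∀ p ∈ r.sig, ev.val p ∈ r.val p

/-- A set of rules is edge-unique iff any two rules in it with the same signature whose
value languages pairwise intersect at every key of the signature are equal. -/
def EdgeUnique {K T A : Type*} (E : Set (Rule K T A)) : Prop :=
  ∀ e ∈ E, ∀ e' ∈ E, e.sig = e'.sig →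
    (∀ p ∈ e.sig, (e.val p ∩ e'.val p).Nonempty) → e = e'

theorem exists_common_match_iff {K T A : Type*} {e e' : Rule K T A} :
    (∃ ev, Matches e ev ∧ Matches e' ev) ↔
      e.sig = e'.sig ∧ ∀ p ∈ e.sig, (e.val p ∩ e'.val p).Nonempty := by
  constructor
  · rintro ⟨ev, ⟨hsig, hmem⟩, ⟨hsig', hmem'⟩⟩
    exact ⟨hsig.trans hsig'.symm, fun p hp =>
      ⟨ev.val p, hmem p hp, hmem' p (hsig' ▸ hsig ▸ hp)⟩⟩
  · rintro ⟨hsig, hne⟩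
    choose! w hw using hne
    refine ⟨⟨e.sig, w⟩, ⟨rfl, fun p hp => (hw p hp).1⟩, ⟨hsig.symm, fun p hp => ?_⟩⟩
    exact (hw p (hsig ▸ hp)).2

/-- a set of rules is edge-unique iff every event is matched by at most
one rule of the set. -/
theorem edgeUnique_iff_at_most_one_match {K T A : Type*} (E : Set (Rule K T A)) :
    EdgeUnique E ↔
      ∀ ev : Event K T A, {e | e ∈ E ∧ Matches e ev}.Subsingleton := by
  constructor
  · rintro h ev e ⟨he, hmatch⟩ e' ⟨he', hmatch'⟩
    obtain ⟨hsig, hne⟩ := exists_common_match_iff.1 ⟨ev, hmatch, hmatch'⟩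
    exact h e he e' he' hsig hne
  · intro h e he e' he' hsig hne
    obtain ⟨ev, hmatch, hmatch'⟩ := exists_common_match_iff.2 ⟨hsig, hne⟩
    exact h ev ⟨he, hmatch⟩ ⟨he', hmatch'⟩
end

section
/- The LSimRank iteration map F is a c-Lipschitz contraction in the entrywise supremum metric: for every c ≥ 0, every pair of real n×n matrices S and T, and every M ≥ 0 such that |S_{ij} − T_{ij}| ≤ M for all i,j, one has |F(S)_{ij} − F(T)_{ij}| ≤ c·M for all i,j. -/
/-!
Entrywise, `F(S) - F(T) = c · (L ∘ N ∘ Aᵀ (S - T) A)`. Since `A` is a nonnegative (0/1) matrix,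
`|(Aᵀ (S - T) A)ᵢⱼ| ≤ indeg(i) · M · indeg(j)`, which the factor `Nᵢⱼ` exactly cancels, and
`|Lᵢⱼ| ≤ 1` then leaves the bound `c · M`.
-/

open Matrix

variable {n : ℕ}

/-- The in-degree of vertex `j` in the graph with adjacency matrix `A`. -/
noncomputable def indeg (A : Matrix (Fin n) (Fin n) ℝ) (j : Fin n) : ℝ :=
  ∑ u, A u j

/-- The normalization matrix: `N i j = 1/(indeg i · indeg j)` for `i ≠ j` (with the
convention that this is `0` when the product of in-degrees is `0`, since in `ℝ` we
have `0⁻¹ = 0`), and `N i i = 0`. -/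
noncomputable def normMat (A : Matrix (Fin n) (Fin n) ℝ) : Matrix (Fin n) (Fin n) ℝ :=
  Matrix.of fun i j => if i = j then 0 else (indeg A i * indeg A j)⁻¹

/-- The LSimRank iteration map `F(S) = I + c · (L ∘ N ∘ (Aᵀ S A))`,
where `∘` is the entrywise (Hadamard) product. -/
noncomputable def lsimStep (A L : Matrix (Fin n) (Fin n) ℝ) (c : ℝ)
    (S : Matrix (Fin n) (Fin n) ℝ) : Matrix (Fin n) (Fin n) ℝ :=
  1 + c • (Matrix.hadamard L (Matrix.hadamard (normMat A) (Aᵀ * S * A)))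

/-- The LSimRank sequence: `S 0 = I`, `S (m+1) = F (S m)`. -/
noncomputable def lsimSeq (A L : Matrix (Fin n) (Fin n) ℝ) (c : ℝ) :
    ℕ → Matrix (Fin n) (Fin n) ℝ
  | 0 => 1
  | m + 1 => lsimStep A L c (lsimSeq A L c m)

section SumBounds

variable {R : Type*} [CommRing R] [LinearOrder R] [IsStrictOrderedRing R]

theorem abs_sum_mul_le_sum_mul {ι : Type*} (s : Finset ι) {a d : ι → R} {M : R}
    (ha : ∀ i, 0 ≤ a i) (hd : ∀ i, |d i| ≤ M) :
    |∑ i ∈ s, a i * d i| ≤ (∑ i ∈ s, a i) * M :=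
  calc |∑ i ∈ s, a i * d i|
      ≤ ∑ i ∈ s, |a i * d i| := Finset.abs_sum_le_sum_abs _ _
    _ = ∑ i ∈ s, a i * |d i| := by simp only [abs_mul, abs_of_nonneg (ha _)]
    _ ≤ ∑ i ∈ s, a i * M := Finset.sum_le_sum fun i _ => mul_le_mul_of_nonneg_left (hd i) (ha i)
    _ = (∑ i ∈ s, a i) * M := (Finset.sum_mul _ _ _).symm

theorem Matrix.abs_transpose_mul_mul_apply_le {l m n o : Type*} [Fintype m] [Fintype n]
    {A : Matrix m l R} {D : Matrix m n R} {B : Matrix n o R} {M : R}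
    (hA : ∀ u i, 0 ≤ A u i) (hB : ∀ v j, 0 ≤ B v j) (hD : ∀ u v, |D u v| ≤ M) (i : l) (j : o) :
    |(Aᵀ * D * B) i j| ≤ (∑ u, A u i) * M * ∑ v, B v j := by
  have hAD : ∀ v, |(Aᵀ * D) i v| ≤ (∑ u, A u i) * M := fun v => by
    simpa only [mul_apply, transpose_apply] using
      abs_sum_mul_le_sum_mul Finset.univ (hA · i) (hD · v)
  rw [mul_apply, mul_comm _ (∑ v, B v j)]
  simpa only [mul_comm ((Aᵀ * D) i _)] using
    abs_sum_mul_le_sum_mul Finset.univ (hB · j) hAD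

end SumBounds

theorem indeg_nonneg {A : Matrix (Fin n) (Fin n) ℝ} (hA : ∀ u v, 0 ≤ A u v) (j : Fin n) :
    0 ≤ indeg A j :=
  Finset.sum_nonneg fun u _ => hA u j

theorem abs_normMat_mul_le {A : Matrix (Fin n) (Fin n) ℝ} (hA : ∀ u v, 0 ≤ A u v)
    {M x : ℝ} (hM : 0 ≤ M) {i j : Fin n} (hx : |x| ≤ indeg A i * M * indeg A j) :
    |normMat A i j * x| ≤ M := by
  have hd : 0 ≤ indeg A i * indeg A j := mul_nonneg (indeg_nonneg hA i) (indeg_nonneg hA j)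
  simp only [normMat, of_apply]
  split_ifs
  · simpa using hM
  · rw [abs_mul, abs_inv, abs_of_nonneg hd]
    -- a vanishing in-degree product forces `x = 0`, and `0⁻¹ = 0` keeps the bound valid
    exact inv_mul_le_of_le_mul₀ hd hM (by rwa [mul_right_comm] at hx)

theorem lsimStep_sub_apply (A L : Matrix (Fin n) (Fin n) ℝ) (c : ℝ)
    (S T : Matrix (Fin n) (Fin n) ℝ) (i j : Fin n) :
    lsimStep A L c S i j - lsimStep A L c T i j
      = c * (L i j * (normMat A i j * (Aᵀ * (S - T) * A) i j)) := by
  simp only [lsimStep, Matrix.mul_sub, Matrix.sub_mul, Matrix.add_apply, Matrix.sub_apply,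
    Matrix.smul_apply, hadamard_apply, smul_eq_mul]
  ring

theorem lsimStep_contraction_general (A L : Matrix (Fin n) (Fin n) ℝ)
    (hA : ∀ i j, A i j = 0 ∨ A i j = 1)
    (hL0 : ∀ i j, 0 ≤ L i j) (hL1 : ∀ i j, L i j ≤ 1)
    (c : ℝ) (hc : 0 ≤ c)
    (S T : Matrix (Fin n) (Fin n) ℝ) (M : ℝ)
    (h : ∀ i j, |S i j - T i j| ≤ M) :
    ∀ i j, |lsimStep A L c S i j - lsimStep A L c T i j| ≤ c * M := by
  intro i j
  have hM : 0 ≤ M := (abs_nonneg _).trans (h i j)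
  have hA0 : ∀ u v, 0 ≤ A u v := fun u v => (hA u v).elim (·.ge) (·.symm ▸ zero_le_one)
  have hAST : |(Aᵀ * (S - T) * A) i j| ≤ indeg A i * M * indeg A j :=
    abs_transpose_mul_mul_apply_le hA0 hA0 h i j
  have hN : |normMat A i j * (Aᵀ * (S - T) * A) i j| ≤ M := abs_normMat_mul_le hA0 hM hAST
  have hL : |L i j| ≤ 1 := abs_le.mpr ⟨by linarith [hL0 i j], hL1 i j⟩
  rw [lsimStep_sub_apply, abs_mul, abs_mul, abs_of_nonneg hc]
  calc c * (|L i j| * |normMat A i j * (Aᵀ * (S - T) * A) i j|)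
      ≤ c * (1 * M) := by gcongr
    _ = c * M := by rw [one_mul]

/-- the LSimRank iteration map is a `c`-Lipschitz contraction in the
entrywise supremum metric. -/
theorem lsimStep_contraction (A L : Matrix (Fin n) (Fin n) ℝ)
    (hA : ∀ i j, A i j = 0 ∨ A i j = 1)
    (hL0 : ∀ i j, 0 ≤ L i j) (hL1 : ∀ i j, L i j ≤ 1)
    (c : ℝ) (hc : 0 ≤ c)
    (S T : Matrix (Fin n) (Fin n) ℝ) (M : ℝ) (hM : 0 ≤ M)
    (h : ∀ i j, |S i j - T i j| ≤ M) :
    ∀ i j, |lsimStep A L c S i j - lsimStep A L c T i j| ≤ c * M :=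
  lsimStep_contraction_general A L hA hL0 hL1 c hc S T M h
end
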